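/- For all integers m ≥ 0: P_1(m) = m/2, P_2(m) = m(3m+1)/24, P_3(m) = m²(m+1)/48, and P_4(m) = m(−2 + 5m + 30m² + 15m³)/5760. -/

import Mathlib

/-- P_r(m), defined by P_0(m) = 1, P_r(0) = 0 for r ≥ 1, and
    (r+m)·P_r(m) = m·(P_{r−1}(m) + P_r(m−1)) for r, m ≥ 1. -/
def Ppoly : ℕ → ℕ → ℚ
  | 0, _ => 1
  | _ + 1, 0 => 0
  | r + 1, m + 1 =>
      ((m : ℚ) + 1) * (Ppoly r (m + 1) + Ppoly (r + 1) m) / ((r : ℚ) + 1 + ((m : ℚ) + 1))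

/-! The recurrence determines `Ppoly (r + 1)` from `Ppoly r` by induction on `m`, so each closed
form is verified by checking that it vanishes at `m = 0` and satisfies the recurrence with the
previous closed form, a polynomial identity. -/

theorem Ppoly_zero_left (m : ℕ) : Ppoly 0 m = 1 := by
  rw [Ppoly]

theorem Ppoly_succ_zero (r : ℕ) : Ppoly (r + 1) 0 = 0 := by
  rw [Ppoly]

theorem Ppoly_succ_succ (r m : ℕ) :
    ((r + 1 : ℕ) + (m + 1 : ℕ) : ℚ) * Ppoly (r + 1) (m + 1)
      = (m + 1 : ℕ) * (Ppoly r (m + 1) + Ppoly (r + 1) m) := by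
  rw [Ppoly]
  push_cast
  field_simp

theorem Ppoly_succ_eq_of_recurrence {r : ℕ} {f : ℕ → ℚ} (h₀ : f 0 = 0)
    (hf : ∀ m : ℕ, ((r + 1 : ℕ) + (m + 1 : ℕ) : ℚ) * f (m + 1)
      = (m + 1 : ℕ) * (Ppoly r (m + 1) + f m)) (m : ℕ) :
    Ppoly (r + 1) m = f m := by
  induction m with
  | zero => rw [Ppoly_succ_zero, h₀]
  | succ m ih =>
    have hpos : ((r + 1 : ℕ) + (m + 1 : ℕ) : ℚ) ≠ 0 := by positivity
    apply mul_left_cancel₀ hpos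
    rw [Ppoly_succ_succ, hf, ih]

theorem Ppoly_one (m : ℕ) : Ppoly 1 m = (m : ℚ) / 2 := by
  revert m
  refine Ppoly_succ_eq_of_recurrence ?_ fun n => ?_
  · simp
  rw [Ppoly_zero_left]
  push_cast
  ring

theorem Ppoly_two (m : ℕ) : Ppoly 2 m = (m : ℚ) * (3 * m + 1) / 24 := by
  revert m
  refine Ppoly_succ_eq_of_recurrence ?_ fun n => ?_
  · simp
  rw [Ppoly_one]
  push_cast
  ring

theorem Ppoly_three (m : ℕ) : Ppoly 3 m = (m : ℚ) ^ 2 * (m + 1) / 48 := by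
  revert m
  refine Ppoly_succ_eq_of_recurrence ?_ fun n => ?_
  · simp
  rw [Ppoly_two]
  push_cast
  ring

theorem Ppoly_four (m : ℕ) :
    Ppoly 4 m = (m : ℚ) * (-2 + 5 * m + 30 * (m : ℚ) ^ 2 + 15 * (m : ℚ) ^ 3) / 5760 := by
  revert m
  refine Ppoly_succ_eq_of_recurrence ?_ fun n => ?_
  · simp
  rw [Ppoly_three]
  push_cast
  ring

theorem Ppoly_closed_forms (m : ℕ) :
    Ppoly 1 m = (m : ℚ) / 2
    ∧ Ppoly 2 m = (m : ℚ) * (3 * m + 1) / 24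
    ∧ Ppoly 3 m = (m : ℚ) ^ 2 * (m + 1) / 48
    ∧ Ppoly 4 m = (m : ℚ) * (-2 + 5 * m + 30 * (m : ℚ) ^ 2 + 15 * (m : ℚ) ^ 3) / 5760 :=
  ⟨Ppoly_one m, Ppoly_two m, Ppoly_three m, Ppoly_four m⟩
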